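/- arXiv:1007.5017 — 9 statements merged into one kernel-verified Lean document; each statement's English description precedes it below -/
import Mathlib

section
/- A sequence of positive reals a_0, ..., a_m that is ratio monotone is log-concave, i.e., if a_m/a_0 ≤ a_{m-1}/a_1 ≤ ... ≤ a_{m-i}/a_i ≤ ... ≤ 1 (for i up to ⌊(m-1)/2⌋) and a_0/a_{m-1} ≤ a_1/a_{m-2} ≤ ... ≤ a_{i-1}/a_{m-i} ≤ ... ≤ 1 (for i up to ⌊m/2⌋), then a_k² ≥ a_{k-1}·a_{k+1} for all 1 ≤ k ≤ m-1. -/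
/-!
Clearing denominators, the two chains of ratios say that `a (i+1) * a (j+1) ≤ a i * a j`
whenever `i + j + 1 = m` and `a i * a j ≤ a (i+1) * a (j+1)` whenever `i + j + 2 = m`,
for all `i, j`: by symmetry one may take `i ≤ j`, and the closing conditions `≤ 1` of the
chains supply the middle pairs `j ∈ {i, i+1}`. Taking `j = m - l - 2` in both and multiplying,
the factor `a j * a (j+1)` cancels and leaves `a l * a (l+2) ≤ a (l+1) ^ 2`.
-/

def RatioMonotone (a : ℕ → ℝ) (m : ℕ) : Prop :=
  (∀ i : ℕ, i + 1 ≤ (m - 1) / 2 → a (m - i) / a i ≤ a (m - (i + 1)) / a (i + 1)) ∧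
  a (m - (m - 1) / 2) / a ((m - 1) / 2) ≤ 1 ∧
  (∀ i : ℕ, 1 ≤ i → i + 1 ≤ m / 2 → a (i - 1) / a (m - i) ≤ a i / a (m - (i + 1))) ∧
  (1 ≤ m / 2 → a (m / 2 - 1) / a (m - m / 2) ≤ 1)

theorem mul_le_sq_of_mul_le_mul {x y z p q : ℝ} (hx : 0 ≤ x) (hz : 0 ≤ z) (hp : 0 < p)
    (hq : 0 < q) (h₁ : x * p ≤ y * q) (h₂ : z * q ≤ y * p) : x * z ≤ y ^ 2 := by
  have h := mul_le_mul h₁ h₂ (by positivity) ((mul_nonneg hx hp.le).trans h₁)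
  refine le_of_mul_le_mul_right ?_ (mul_pos hp hq)
  calc x * z * (p * q) = x * p * (z * q) := by ring
    _ ≤ y * q * (y * p) := h
    _ = y ^ 2 * (p * q) := by ring

namespace RatioMonotone

theorem succ_mul_succ_le {a : ℕ → ℝ} {m : ℕ} (hpos : ∀ k ≤ m, 0 < a k)
    (h : RatioMonotone a m) {i j : ℕ} (hm : i + j + 1 = m) :
    a (i + 1) * a (j + 1) ≤ a i * a j := by
  wlog hij : i ≤ j generalizing i j
  · simpa only [mul_comm] using this (i := j) (j := i) (by omega) (by omega)
  obtain ⟨hchain, hmid, -, -⟩ := h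
  by_cases hi : i + 1 ≤ (m - 1) / 2
  · have h' := hchain i hi
    rw [show m - i = j + 1 by omega, show m - (i + 1) = j by omega,
      div_le_div_iff₀ (hpos i (by omega)) (hpos (i + 1) (by omega))] at h'
    simpa only [mul_comm] using h'
  · rw [show (m - 1) / 2 = i by omega, show m - i = j + 1 by omega,
      div_le_one (hpos i (by omega))] at hmid
    have hj : a (i + 1) ≤ a j := by
      rcases (show j = i ∨ j = i + 1 by omega) with rfl | rfl
      · exact hmid
      · exact le_rfl
    rw [mul_comm (a i)]
    exact mul_le_mul hj hmid (hpos _ (by omega)).le (hpos _ (by omega)).le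

theorem mul_le_succ_mul_succ {a : ℕ → ℝ} {m : ℕ} (hpos : ∀ k ≤ m, 0 < a k)
    (h : RatioMonotone a m) {i j : ℕ} (hm : i + j + 2 = m) :
    a i * a j ≤ a (i + 1) * a (j + 1) := by
  wlog hij : i ≤ j generalizing i j
  · simpa only [mul_comm] using this (i := j) (j := i) (by omega) (by omega)
  obtain ⟨-, -, hchain, hmid⟩ := h
  by_cases hi : i + 2 ≤ m / 2
  · have h' := hchain (i + 1) (by omega) hi
    rw [show i + 1 - 1 = i by omega, show m - (i + 1) = j + 1 by omega,
      show m - (i + 1 + 1) = j by omega,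
      div_le_div_iff₀ (hpos (j + 1) (by omega)) (hpos j (by omega))] at h'
    exact h'
  · have hmid := hmid (by omega)
    rw [show m / 2 - 1 = i by omega, show m - m / 2 = j + 1 by omega,
      div_le_one (hpos (j + 1) (by omega))] at hmid
    have hj : a j ≤ a (i + 1) := by
      rcases (show j = i ∨ j = i + 1 by omega) with rfl | rfl
      · exact hmid
      · exact le_rfl
    rw [mul_comm (a (i + 1))]
    exact mul_le_mul hmid hj (hpos _ (by omega)).le (hpos _ (by omega)).le

end RatioMonotone

theorem stmt_3 (m : ℕ) (a : ℕ → ℝ)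
    (hpos : ∀ k ≤ m, 0 < a k)
    (hrm : RatioMonotone a m) :
    ∀ k : ℕ, 1 ≤ k → k + 1 ≤ m → a (k - 1) * a (k + 1) ≤ a k ^ 2 := by
  intro k hk hkm
  obtain ⟨l, rfl⟩ : ∃ l, k = l + 1 := ⟨k - 1, by omega⟩
  obtain ⟨j, rfl⟩ : ∃ j, m = l + j + 2 := ⟨m - l - 2, by omega⟩
  rw [Nat.add_sub_cancel]
  exact mul_le_sq_of_mul_le_mul (hpos l (by omega)).le (hpos (l + 2) hkm).le
    (hpos j (by omega)) (hpos (j + 1) (by omega))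
    (hrm.mul_le_succ_mul_succ hpos rfl) (hrm.succ_mul_succ_le hpos (by omega))
end

section
/- A sequence of positive reals a_0, ..., a_m that is ratio monotone is spiral, i.e., a_m ≤ a_0 ≤ a_{m-1} ≤ a_1 ≤ a_{m-2} ≤ ... ≤ a_{⌊m/2⌋}. -/
/-! Both halves of the spiral come from one observation: a ratio `p n / q n` that is
nondecreasing on `[lo, hi]` and at most `1` at `hi` is at most `1` everywhere on `[lo, hi]`. -/

theorem le_of_div_le_div_succ_of_div_le_one {p q : ℕ → ℝ} {lo hi i : ℕ}
    (hstep : ∀ n, lo ≤ n → n + 1 ≤ hi → p n / q n ≤ p (n + 1) / q (n + 1))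
    (hlast : p hi / q hi ≤ 1) (hq : 0 < q i) (hlo : lo ≤ i) (hhi : i ≤ hi) :
    p i ≤ q i := by
  have hmono : MonotoneOn (fun n ↦ p n / q n) (Set.Icc lo hi) :=
    monotoneOn_of_le_add_one Set.ordConnected_Icc fun n _ hn hn1 ↦ hstep n hn.1 hn1.2
  have hle : p i / q i ≤ p hi / q hi :=
    hmono ⟨hlo, hhi⟩ ⟨hlo.trans hhi, le_rfl⟩ hhi
  exact (div_le_one hq).mp (hle.trans hlast)

namespace RatioMonotone

variable {a : ℕ → ℝ} {m : ℕ}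

theorem apply_sub_le (hrm : RatioMonotone a m) (hpos : ∀ k ≤ m, 0 < a k) {i : ℕ}
    (hi : 2 * i < m) : a (m - i) ≤ a i :=
  le_of_div_le_div_succ_of_div_le_one (p := fun n ↦ a (m - n)) (q := a) (lo := 0)
    (fun n _ hn ↦ hrm.1 n hn) hrm.2.1 (hpos i (by omega)) (Nat.zero_le i) (by omega)

theorem le_apply_sub_sub_one (hrm : RatioMonotone a m) (hpos : ∀ k ≤ m, 0 < a k) {i : ℕ}
    (hi : 2 * i + 1 < m) : a i ≤ a (m - i - 1) := by
  have h := le_of_div_le_div_succ_of_div_le_one (p := fun n ↦ a (n - 1)) (q := fun n ↦ a (m - n))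
    (lo := 1) (hi := m / 2) (i := i + 1)
    (fun n hn hn1 ↦ by simpa using hrm.2.2.1 n hn hn1) (hrm.2.2.2 (by omega))
    (hpos _ (by omega)) (by omega) (by omega)
  simpa [Nat.sub_sub] using h

end RatioMonotone

theorem stmt_4 (m : ℕ) (a : ℕ → ℝ)
    (hpos : ∀ k ≤ m, 0 < a k)
    (hrm : RatioMonotone a m) :
    (∀ i : ℕ, 2 * i < m → a (m - i) ≤ a i) ∧
    (∀ i : ℕ, 2 * i + 1 < m → a i ≤ a (m - i - 1)) :=
  ⟨fun _ hi ↦ hrm.apply_sub_le hpos hi, fun _ hi ↦ hrm.le_apply_sub_sub_one hpos hi⟩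
end

section
/- If B(x) = ∑_{k=0}^m a_k x^k is a polynomial with positive coefficients whose coefficient sequence is ratio monotone, then the coefficient sequence b_k = a_{k-1} + a_k (with a_{-1} = a_{m+1} = 0) of (x+1)B(x) is also ratio monotone. -/
/-!
Clearing denominators, ratio monotonicity of `a₀, …, aₙ` says that `a (n - k) / a k` is
nondecreasing and `a (n - 1 - k) / a k` nonincreasing in `k` over the *whole* range: the
symmetries `k ↦ n - k` and `k ↦ n - 1 - k` invert these ratios, so the middle conditions `≤ 1`
extend the half-range monotonicity to the full range. In cross-multiplied form this reads
`a (i+1) a (j+1) ≤ a i a j` when `i + j + 1 = n`, and `a i a j ≤ a (i+1) a (j+1)` when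
`i + j + 2 = n`.

For `b k = a (k-1) + a k`, expanding `b (i+1) b (j+1) - b i b j` leaves three differences of the
same shape for `a`: two instances of the hypothesis, and a two-step instance
`a (i+2) a (j+2) ≤ a i a j`, obtained by multiplying two instances and cancelling
`a (i+1) a (j+1)`.
-/

def CrossDecreasing (a : ℕ → ℝ) (n : ℕ) : Prop :=
  ∀ i j, i + j + 1 = n → a (i + 1) * a (j + 1) ≤ a i * a j

def CrossIncreasing (a : ℕ → ℝ) (n : ℕ) : Prop :=
  ∀ i j, i + j + 2 = n → a i * a j ≤ a (i + 1) * a (j + 1)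

section

variable {a : ℕ → ℝ} {n : ℕ}

theorem crossDecreasing_of_le
    (h : ∀ i j, i ≤ j → i + j + 1 = n → a (i + 1) * a (j + 1) ≤ a i * a j) :
    CrossDecreasing a n := by
  intro i j hij
  rcases le_total i j with hle | hle
  · exact h i j hle hij
  · rw [mul_comm (a (i + 1)), mul_comm (a i)]
    exact h j i hle (by omega)

theorem crossIncreasing_of_le
    (h : ∀ i j, i ≤ j → i + j + 2 = n → a i * a j ≤ a (i + 1) * a (j + 1)) :
    CrossIncreasing a n := by
  intro i j hij
  rcases le_total i j with hle | hle
  · exact h i j hle hij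
  · rw [mul_comm (a i), mul_comm (a (i + 1))]
    exact h j i hle (by omega)

theorem mul_succ_le_mul_iff {i j : ℕ} (hij : i ≤ j) (hji : j ≤ i + 1)
    (ha : ∀ k ≤ j + 1, 0 < a k) :
    a (i + 1) * a (j + 1) ≤ a i * a j ↔ a (j + 1) ≤ a i := by
  obtain rfl | rfl : i = j ∨ j = i + 1 := by omega
  · exact (mul_self_le_mul_self_iff (ha _ le_rfl).le (ha i (by omega)).le).symm
  · rw [mul_comm (a i)]
    exact mul_le_mul_iff_of_pos_left (ha _ (by omega))

theorem mul_le_mul_succ_iff {i j : ℕ} (hij : i ≤ j) (hji : j ≤ i + 1)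
    (ha : ∀ k ≤ j + 1, 0 < a k) :
    a i * a j ≤ a (i + 1) * a (j + 1) ↔ a i ≤ a (j + 1) := by
  obtain rfl | rfl : i = j ∨ j = i + 1 := by omega
  · exact (mul_self_le_mul_self_iff (ha i (by omega)).le (ha _ le_rfl).le).symm
  · rw [mul_comm (a i)]
    exact mul_le_mul_iff_of_pos_left (ha _ (by omega))

theorem crossDecreasing_iff (ha : ∀ k ≤ n, 0 < a k) :
    CrossDecreasing a n ↔
      (∀ i, i + 1 ≤ (n - 1) / 2 → a (n - i) / a i ≤ a (n - (i + 1)) / a (i + 1)) ∧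
      a (n - (n - 1) / 2) / a ((n - 1) / 2) ≤ 1 := by
  have hstep : ∀ i j, i + j + 1 = n →
      (a (j + 1) / a i ≤ a j / a (i + 1) ↔ a (i + 1) * a (j + 1) ≤ a i * a j) := by
    intro i j hij
    rw [div_le_div_iff₀ (ha i (by omega)) (ha (i + 1) (by omega)), mul_comm (a (i + 1)),
      mul_comm (a i)]
  have hmid : 1 ≤ n → (a (n - (n - 1) / 2) / a ((n - 1) / 2) ≤ 1 ↔
      a ((n - 1) / 2 + 1) * a (n / 2 + 1) ≤ a ((n - 1) / 2) * a (n / 2)) := by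
    intro hn
    rw [div_le_one (ha _ (by omega)), show n - (n - 1) / 2 = n / 2 + 1 by omega,
      mul_succ_le_mul_iff (by omega) (by omega) fun k hk => ha k (by omega)]
  constructor
  · intro h
    refine ⟨fun i hi => ?_, ?_⟩
    · have := (hstep i (n - (i + 1)) (by omega)).2 (h _ _ (by omega))
      rwa [show n - (i + 1) + 1 = n - i by omega] at this
    · rcases Nat.eq_zero_or_pos n with rfl | hn
      · exact div_self_le_one _
      · exact (hmid hn).2 (h _ _ (by omega))
  · rintro ⟨hchain, hlast⟩
    refine crossDecreasing_of_le fun i j hle hij => ?_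
    by_cases hi : i + 1 ≤ (n - 1) / 2
    · obtain rfl : j = n - (i + 1) := by omega
      have := hchain i hi
      rw [show n - i = n - (i + 1) + 1 by omega] at this
      exact (hstep i _ hij).1 this
    · obtain ⟨rfl, rfl⟩ : i = (n - 1) / 2 ∧ j = n / 2 := by omega
      exact (hmid (by omega)).1 hlast

theorem crossIncreasing_iff (ha : ∀ k ≤ n, 0 < a k) :
    CrossIncreasing a n ↔
      (∀ i, 1 ≤ i → i + 1 ≤ n / 2 → a (i - 1) / a (n - i) ≤ a i / a (n - (i + 1))) ∧
      (1 ≤ n / 2 → a (n / 2 - 1) / a (n - n / 2) ≤ 1) := by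
  have hstep : ∀ i j, i + j + 2 = n →
      (a i / a (j + 1) ≤ a (i + 1) / a j ↔ a i * a j ≤ a (i + 1) * a (j + 1)) := fun i j hij =>
    div_le_div_iff₀ (ha (j + 1) (by omega)) (ha j (by omega))
  have hmid : 1 ≤ n / 2 → (a (n / 2 - 1) / a (n - n / 2) ≤ 1 ↔
      a (n / 2 - 1) * a ((n - 1) / 2) ≤ a (n / 2 - 1 + 1) * a ((n - 1) / 2 + 1)) := by
    intro hn
    rw [div_le_one (ha _ (by omega)), show n - n / 2 = (n - 1) / 2 + 1 by omega,
      mul_le_mul_succ_iff (by omega) (by omega) fun k hk => ha k (by omega)]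
  constructor
  · intro h
    refine ⟨fun i hi₁ hi => ?_, fun hn => (hmid hn).2 (h _ _ (by omega))⟩
    have := (hstep (i - 1) (n - (i + 1)) (by omega)).2 (h _ _ (by omega))
    rwa [show n - (i + 1) + 1 = n - i by omega, show i - 1 + 1 = i by omega] at this
  · rintro ⟨hchain, hlast⟩
    refine crossIncreasing_of_le fun i j hle hij => ?_
    by_cases hi : i + 2 ≤ n / 2
    · obtain rfl : j = n - (i + 2) := by omega
      have := hchain (i + 1) (by omega) hi
      rw [show i + 1 - 1 = i by omega, show n - (i + 1) = n - (i + 2) + 1 by omega] at this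
      exact (hstep i _ hij).1 this
    · obtain ⟨rfl, rfl⟩ : i = n / 2 - 1 ∧ j = (n - 1) / 2 := by omega
      exact (hmid (by omega)).1 (hlast (by omega))

theorem ratioMonotone_iff (ha : ∀ k ≤ n, 0 < a k) :
    RatioMonotone a n ↔ CrossDecreasing a n ∧ CrossIncreasing a n := by
  rw [crossDecreasing_iff ha, crossIncreasing_iff ha, RatioMonotone, and_assoc]

theorem CrossDecreasing.mul_le_mul_two_step (h : CrossDecreasing a n) (ha : ∀ k ≤ n, 0 < a k)
    {i j : ℕ} (hij : i + j + 2 = n) : a (i + 2) * a (j + 2) ≤ a i * a j := by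
  have h₁ : a (i + 1) * a (j + 2) ≤ a i * a (j + 1) := h i (j + 1) (by omega)
  have h₂ : a (i + 2) * a (j + 1) ≤ a (i + 1) * a j := h (i + 1) j (by omega)
  have hprod := mul_le_mul h₁ h₂ (mul_pos (ha _ (by omega)) (ha _ (by omega))).le
    (mul_pos (ha _ (by omega)) (ha _ (by omega))).le
  refine le_of_mul_le_mul_right ?_ (mul_pos (ha (i + 1) (by omega)) (ha (j + 1) (by omega)))
  linear_combination hprod

theorem CrossIncreasing.mul_le_mul_two_step (h : CrossIncreasing a n) (ha : ∀ k ≤ n, 0 < a k)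
    {i j : ℕ} (hij : i + j + 3 = n) : a i * a j ≤ a (i + 2) * a (j + 2) := by
  have h₁ : a i * a (j + 1) ≤ a (i + 1) * a (j + 2) := h i (j + 1) (by omega)
  have h₂ : a (i + 1) * a j ≤ a (i + 2) * a (j + 1) := h (i + 1) j (by omega)
  have hprod := mul_le_mul h₁ h₂ (mul_pos (ha _ (by omega)) (ha _ (by omega))).le
    (mul_pos (ha _ (by omega)) (ha _ (by omega))).le
  refine le_of_mul_le_mul_right ?_ (mul_pos (ha (i + 1) (by omega)) (ha (j + 1) (by omega)))
  linear_combination hprod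

variable {b : ℕ → ℝ}

theorem CrossDecreasing.adjacent_sum (h : CrossDecreasing a n) (ha : ∀ k ≤ n, 0 < a k)
    (hb₀ : b 0 = a 0) (hb : ∀ k < n, b (k + 1) = a k + a (k + 1)) (hb_last : b (n + 1) = a n) :
    CrossDecreasing b (n + 1) := by
  refine crossDecreasing_of_le fun i j hle hij => ?_
  rcases i with _ | i
  · obtain rfl : n = j := by omega
    rcases n with _ | n
    · rw [hb_last, hb₀]
    · rw [hb₀, hb_last, hb 0 (by omega), hb n (by omega)]
      linear_combination h 0 n (by omega)
  · obtain ⟨j, rfl⟩ : ∃ j', j = j' + 1 := ⟨j - 1, by omega⟩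
    rw [hb i (by omega), hb (i + 1) (by omega), hb j (by omega), hb (j + 1) (by omega)]
    linear_combination h i (j + 1) (by omega) + h (i + 1) j (by omega) +
      h.mul_le_mul_two_step ha (show i + j + 2 = n by omega)

theorem CrossIncreasing.adjacent_sum (h : CrossIncreasing a n) (ha : ∀ k ≤ n, 0 < a k)
    (hb₀ : b 0 = a 0) (hb : ∀ k < n, b (k + 1) = a k + a (k + 1)) :
    CrossIncreasing b (n + 1) := by
  refine crossIncreasing_of_le fun i j hle hij => ?_
  rcases i with _ | i
  · rcases j with _ | j
    · rw [hb₀, hb 0 (by omega)]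
      nlinarith [ha 0 (by omega), ha 1 (by omega)]
    · rw [hb₀, hb 0 (by omega), hb j (by omega), hb (j + 1) (by omega)]
      linear_combination h 0 j (by omega) +
        mul_pos (add_pos (ha 0 (by omega)) (ha 1 (by omega))) (ha (j + 2) (by omega))
  · obtain ⟨j, rfl⟩ : ∃ j', j = j' + 1 := ⟨j - 1, by omega⟩
    rw [hb i (by omega), hb (i + 1) (by omega), hb j (by omega), hb (j + 1) (by omega)]
    linear_combination h i (j + 1) (by omega) + h (i + 1) j (by omega) +
      h.mul_le_mul_two_step ha (show i + j + 3 = n by omega)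

end

theorem stmt_6 (m : ℕ) (a b : ℕ → ℝ)
    (hpos : ∀ k ≤ m, 0 < a k)
    (hrm : RatioMonotone a m)
    (hb : ∀ k ≤ m + 1,
      b k = (if k = 0 then 0 else a (k - 1)) + (if k ≤ m then a k else 0)) :
    RatioMonotone b (m + 1) := by
  have hb₀ : b 0 = a 0 := by simpa using hb 0 (Nat.zero_le _)
  have hb_succ : ∀ k < m, b (k + 1) = a k + a (k + 1) := fun k hk => by
    simpa [show k + 1 ≤ m by omega] using hb (k + 1) (by omega)
  have hb_last : b (m + 1) = a m := by simpa using hb (m + 1) le_rfl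
  have hb_pos : ∀ k ≤ m + 1, 0 < b k := by
    rintro (_ | k) hk
    · exact hb₀ ▸ hpos 0 (Nat.zero_le _)
    · rcases Nat.lt_or_ge k m with hk' | hk'
      · exact hb_succ k hk' ▸ add_pos (hpos k hk'.le) (hpos (k + 1) hk')
      · obtain rfl : k = m := by omega
        exact hb_last ▸ hpos k le_rfl
  obtain ⟨hdec, hinc⟩ := (ratioMonotone_iff hpos).1 hrm
  exact (ratioMonotone_iff hb_pos).2
    ⟨hdec.adjacent_sum hpos hb₀ hb_succ hb_last, hinc.adjacent_sum hpos hb₀ hb_succ⟩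
end

section
/- If P(x) = ∑_{k=0}^m a_k x^k with 0 < a_0 ≤ a_1 ≤ ... ≤ a_m and m ≥ 2, then the coefficient sequence of P(x+1) is ratio monotone. -/
open Finset

namespace Nat

theorem sum_range_choose_eq_choose_add_one (n k : ℕ) :
    ∑ j ∈ range n, j.choose k = n.choose (k + 1) := by
  induction n with
  | zero => simp
  | succ n ih => rw [sum_range_succ, ih, choose_succ_succ', add_comm]

theorem choose_le_choose_of_le_of_add_le {n s u : ℕ} (hsu : s ≤ u) (h : s + u ≤ n) :
    n.choose s ≤ n.choose u := by
  wlog hu : 2 * u ≤ n generalizing u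
  · rw [← choose_symm (by omega : u ≤ n)]
    exact this (by omega) (by omega) (by omega)
  clear h
  induction hsu using decreasingInduction with
  | self => rfl
  | of_succ k hk ih => exact (choose_le_succ_of_lt_half_left (by omega)).trans ih

theorem choose_le_choose_of_le_of_le_add {n k l : ℕ} (hlk : l ≤ k) (h : n ≤ k + l) :
    n.choose k ≤ n.choose l := by
  rcases lt_or_ge n k with hnk | hkn
  · simp [choose_eq_zero_of_lt hnk]
  · rw [← choose_symm hkn]
    exact choose_le_choose_of_le_of_add_le (by omega) (by omega)

/-- The ratio `choose j (k + 1) / choose j k = (j - k) / (k + 1)` is monotone in `j`. -/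
theorem choose_succ_mul_choose_le_of_le {j n : ℕ} (k : ℕ) (h : j ≤ n) :
    j.choose (k + 1) * n.choose k ≤ j.choose k * n.choose (k + 1) := by
  refine Nat.le_of_mul_le_mul_right ?_ k.succ_pos
  calc j.choose (k + 1) * n.choose k * (k + 1)
      = j.choose k * n.choose k * (j - k) := by rw [mul_right_comm, choose_succ_right_eq]; ring
    _ ≤ j.choose k * n.choose k * (n - k) := by gcongr
    _ = j.choose k * n.choose (k + 1) * (k + 1) := by rw [mul_assoc, ← choose_succ_right_eq]; ring

theorem mul_le_mul_of_mul_le_mul_of_mul_eq {x y x' y' p q p' q' : ℕ}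
    (hx : x' * p ≤ x * p') (hy : y' * q ≤ y * q') (hpq : p' * q' = p * q) (hpos : 0 < p * q) :
    x' * y' ≤ x * y := by
  refine Nat.le_of_mul_le_mul_right ?_ hpos
  calc x' * y' * (p * q) = (x' * p) * (y' * q) := by ring
    _ ≤ (x * p') * (y * q') := Nat.mul_le_mul hx hy
    _ = x * y * (p * q) := by rw [← hpq]; ring

end Nat

def pascalColSum (m k r : ℕ) : ℕ := ∑ j ∈ Icc r m, j.choose k

theorem pascalColSum_add_choose {m r : ℕ} (k : ℕ) (hr : r ≤ m + 1) :
    pascalColSum m k r + r.choose (k + 1) = (m + 1).choose (k + 1) := by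
  rw [pascalColSum, ← Ico_add_one_right_eq_Icc, ← Nat.sum_range_choose_eq_choose_add_one,
    ← Nat.sum_range_choose_eq_choose_add_one, ← sum_range_add_sum_Ico _ hr, add_comm]

theorem pascalColSum_pos {m k : ℕ} (hk : k ≤ m) : 0 < pascalColSum m k 0 := by
  have := pascalColSum_add_choose k (Nat.zero_le (m + 1))
  rw [Nat.choose_zero_succ, add_zero] at this
  rw [this]
  exact Nat.choose_pos (by omega)

theorem pascalColSum_le_pascalColSum_of_le_of_le_add {m k l : ℕ} (r : ℕ) (hlk : l ≤ k)
    (h : m ≤ k + l) : pascalColSum m k r ≤ pascalColSum m l r :=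
  sum_le_sum fun _ hj => Nat.choose_le_choose_of_le_of_le_add hlk ((mem_Icc.1 hj).2.trans h)

theorem pascalColSum_le_pascalColSum_of_add_eq {m k l r : ℕ} (hkl : k ≤ l) (h : k + l + 1 = m)
    (hr : r ≤ m + 1) : pascalColSum m k r ≤ pascalColSum m l r := by
  have hk := pascalColSum_add_choose k hr
  have hl := pascalColSum_add_choose l hr
  have hsymm : (m + 1).choose (l + 1) = (m + 1).choose (k + 1) := by
    rw [← Nat.choose_symm (by omega : l + 1 ≤ m + 1)]; congr 1; omega
  have hr' : r.choose (l + 1) ≤ r.choose (k + 1) :=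
    Nat.choose_le_choose_of_le_of_le_add (by omega) (by omega)
  omega

theorem pascalColSum_succ_mul_choose_le (m k r : ℕ) :
    pascalColSum m (k + 1) r * m.choose k ≤ pascalColSum m k r * m.choose (k + 1) := by
  simp only [pascalColSum, sum_mul]
  exact sum_le_sum fun j hj => Nat.choose_succ_mul_choose_le_of_le k (mem_Icc.1 hj).2

theorem pascalColSum_mul_choose_le {m r : ℕ} (k : ℕ) (hr : r ≤ m + 1) :
    pascalColSum m k r * (m + 1).choose (k + 2) ≤
      pascalColSum m (k + 1) r * (m + 1).choose (k + 1) := by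
  have hk := pascalColSum_add_choose k hr
  have hk' := pascalColSum_add_choose (k + 1) hr
  have := Nat.choose_succ_mul_choose_le_of_le (k + 1) hr
  apply Nat.le_of_add_le_add_right (b := r.choose (k + 1) * (m + 1).choose (k + 2))
  calc pascalColSum m k r * (m + 1).choose (k + 2) + r.choose (k + 1) * (m + 1).choose (k + 2)
      = (m + 1).choose (k + 1) * (m + 1).choose (k + 2) := by rw [← add_mul, hk]
    _ = pascalColSum m (k + 1) r * (m + 1).choose (k + 1)
          + r.choose (k + 2) * (m + 1).choose (k + 1) := by rw [← hk']; ring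
    _ ≤ _ := by gcongr

theorem pascalColSum_succ_mul_pascalColSum_succ_le {m i j : ℕ} (h : j + 1 + i = m)
    (r q : ℕ) :
    pascalColSum m (j + 1) r * pascalColSum m (i + 1) q ≤
      pascalColSum m j r * pascalColSum m i q := by
  refine Nat.mul_le_mul_of_mul_le_mul_of_mul_eq (pascalColSum_succ_mul_choose_le m j r)
    (pascalColSum_succ_mul_choose_le m i q) ?_ (Nat.mul_pos (Nat.choose_pos (by omega))
      (Nat.choose_pos (by omega)))
  rw [← Nat.choose_symm_of_eq_add h.symm,
    ← Nat.choose_symm_of_eq_add (by omega : m = i + 1 + j), mul_comm]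

theorem pascalColSum_mul_pascalColSum_le_succ_mul_succ {m i j r q : ℕ} (h : i + j + 2 = m)
    (hr : r ≤ m + 1) (hq : q ≤ m + 1) :
    pascalColSum m i r * pascalColSum m j q ≤
      pascalColSum m (i + 1) r * pascalColSum m (j + 1) q := by
  refine Nat.mul_le_mul_of_mul_le_mul_of_mul_eq (pascalColSum_mul_choose_le i hr)
    (pascalColSum_mul_choose_le j hq) ?_ (Nat.mul_pos (Nat.choose_pos (by omega))
      (Nat.choose_pos (by omega)))
  rw [Nat.choose_symm_of_eq_add (by omega : m + 1 = (i + 1) + (j + 2)),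
    Nat.choose_symm_of_eq_add (by omega : m + 1 = (j + 1) + (i + 2)), mul_comm]

section BackDiff

variable {R : Type*} [Ring R]

def backDiff (a : ℕ → R) : ℕ → R
  | 0 => a 0
  | r + 1 => a (r + 1) - a r

theorem sum_range_succ_backDiff (a : ℕ → R) (j : ℕ) :
    ∑ r ∈ range (j + 1), backDiff a r = a j := by
  simp only [sum_range_succ', backDiff, sum_range_sub, sub_add_cancel]

theorem sum_Icc_choose_mul_eq_sum_pascalColSum_mul (a : ℕ → R) (m k : ℕ) :
    ∑ j ∈ Icc k m, (j.choose k : R) * a j =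
      ∑ r ∈ range (m + 1), (pascalColSum m k r : R) * backDiff a r := by
  have hIcc : ∑ j ∈ Icc k m, (j.choose k : R) * a j =
      ∑ j ∈ range (m + 1), (j.choose k : R) * a j := by
    refine sum_subset (fun j hj => ?_) (fun j hj hj' => ?_)
    · simp only [mem_Icc, mem_range] at hj ⊢; omega
    · simp only [mem_Icc, mem_range] at hj hj'
      simp [Nat.choose_eq_zero_of_lt (by omega : j < k)]
  simp_rw [hIcc, ← sum_range_succ_backDiff a, mul_sum, range_eq_Ico]
  rw [← sum_Ico_Ico_comm]
  refine sum_congr rfl fun r _ => ?_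
  rw [pascalColSum, Nat.cast_sum, sum_mul, Ico_add_one_right_eq_Icc]

end BackDiff

theorem sum_mul_sum_le_sum_mul_sum {ι R : Type*} [CommSemiring R] [PartialOrder R]
    [IsOrderedRing R] (s : Finset ι) {w f g f' g' : ι → R} (hw : ∀ i ∈ s, 0 ≤ w i)
    (h : ∀ i ∈ s, ∀ j ∈ s, f i * g j ≤ f' i * g' j) :
    (∑ i ∈ s, f i * w i) * ∑ j ∈ s, g j * w j ≤
      (∑ i ∈ s, f' i * w i) * ∑ j ∈ s, g' j * w j := by
  simp only [sum_mul_sum]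
  refine sum_le_sum fun i hi => sum_le_sum fun j hj => ?_
  calc f i * w i * (g j * w j) = f i * g j * (w i * w j) := by ring
    _ ≤ f' i * g' j * (w i * w j) := mul_le_mul_of_nonneg_right (h i hi j hj)
          (mul_nonneg (hw i hi) (hw j hj))
    _ = f' i * w i * (g' j * w j) := by ring

section PascalColSumCombination

variable {m : ℕ} {b d : ℕ → ℝ} (hd : ∀ r ≤ m, 0 ≤ d r)
  (hb : ∀ k ≤ m, b k = ∑ r ∈ range (m + 1), (pascalColSum m k r : ℝ) * d r)
include hd hb

theorem pos_of_eq_sum_pascalColSum_mul (hd0 : 0 < d 0) {k : ℕ} (hk : k ≤ m) : 0 < b k := by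
  rw [hb k hk]
  refine sum_pos' (fun r hr => ?_) ⟨0, by simp, ?_⟩
  · exact mul_nonneg (Nat.cast_nonneg _) (hd r (by simpa [Nat.lt_succ_iff] using hr))
  · exact mul_pos (by exact_mod_cast pascalColSum_pos hk) hd0

theorem le_of_eq_sum_pascalColSum_mul {k l : ℕ} (hk : k ≤ m) (hl : l ≤ m)
    (h : ∀ r ≤ m, pascalColSum m l r ≤ pascalColSum m k r) : b l ≤ b k := by
  rw [hb k hk, hb l hl]
  refine sum_le_sum fun r hr => ?_
  have hr : r ≤ m := by simpa [Nat.lt_succ_iff] using hr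
  exact mul_le_mul_of_nonneg_right (by exact_mod_cast h r hr) (hd r hr)

theorem mul_le_mul_of_eq_sum_pascalColSum_mul {k l k' l' : ℕ} (hk : k ≤ m) (hl : l ≤ m)
    (hk' : k' ≤ m) (hl' : l' ≤ m)
    (h : ∀ r ≤ m, ∀ q ≤ m,
      pascalColSum m k' r * pascalColSum m l' q ≤ pascalColSum m k r * pascalColSum m l q) :
    b k' * b l' ≤ b k * b l := by
  rw [hb k hk, hb l hl, hb k' hk', hb l' hl']
  refine sum_mul_sum_le_sum_mul_sum _ (fun r hr => hd r (by simpa [Nat.lt_succ_iff] using hr))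
    fun r hr q hq => ?_
  simp only [mem_range, Nat.lt_succ_iff] at hr hq
  exact_mod_cast h r hr q hq

theorem ratioMonotone_of_eq_sum_pascalColSum_mul (hd0 : 0 < d 0) : RatioMonotone b m := by
  have hpos : ∀ k ≤ m, 0 < b k := fun _ => pos_of_eq_sum_pascalColSum_mul hd hb hd0
  refine ⟨fun i hi => ?_, ?_, fun i hi hi' => ?_, fun hs => ?_⟩
  · rw [div_le_div_iff₀ (hpos _ (by omega)) (hpos _ (by omega))]
    refine mul_le_mul_of_eq_sum_pascalColSum_mul hd hb (by omega) (by omega) (by omega) (by omega)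
      fun r _ q _ => ?_
    have := pascalColSum_succ_mul_pascalColSum_succ_le (by omega : m - (i + 1) + 1 + i = m) r q
    rwa [show m - (i + 1) + 1 = m - i by omega] at this
  · rw [div_le_one (hpos _ (by omega))]
    exact le_of_eq_sum_pascalColSum_mul hd hb (by omega) (by omega)
      fun r _ => pascalColSum_le_pascalColSum_of_le_of_le_add r (by omega) (by omega)
  · rw [div_le_div_iff₀ (hpos _ (by omega)) (hpos _ (by omega))]
    refine mul_le_mul_of_eq_sum_pascalColSum_mul hd hb (by omega) (by omega) (by omega) (by omega)
      fun r hr q hq => ?_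
    have := pascalColSum_mul_pascalColSum_le_succ_mul_succ
      (by omega : i - 1 + (m - (i + 1)) + 2 = m) (by omega : r ≤ m + 1) (by omega : q ≤ m + 1)
    rwa [show i - 1 + 1 = i by omega, show m - (i + 1) + 1 = m - i by omega] at this
  · rw [div_le_one (hpos _ (by omega))]
    exact le_of_eq_sum_pascalColSum_mul hd hb (by omega) (by omega)
      fun r hr => pascalColSum_le_pascalColSum_of_add_eq (by omega) (by omega) (by omega)

end PascalColSumCombination

open Finset in
theorem stmt_7_general (m : ℕ) (a b : ℕ → ℝ)
    (hpos : 0 < a 0)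
    (hmono : ∀ k, k + 1 ≤ m → a k ≤ a (k + 1))
    (hb : ∀ k ≤ m, b k = ∑ j ∈ Icc k m, (j.choose k : ℝ) * a j) :
    RatioMonotone b m := by
  refine ratioMonotone_of_eq_sum_pascalColSum_mul (d := backDiff a) (fun r hr => ?_)
    (fun k hk => (hb k hk).trans (sum_Icc_choose_mul_eq_sum_pascalColSum_mul a m k)) hpos
  cases r with
  | zero => exact hpos.le
  | succ r => exact sub_nonneg.2 (hmono r hr)

open Finset in
theorem stmt_7 (m : ℕ) (hm : 2 ≤ m) (a b : ℕ → ℝ)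
    (hpos : 0 < a 0)
    (hmono : ∀ k, k + 1 ≤ m → a k ≤ a (k + 1))
    (hb : ∀ k ≤ m, b k = ∑ j ∈ Icc k m, (j.choose k : ℝ) * a j) :
    RatioMonotone b m :=
  stmt_7_general m a b hpos hmono hb
end

section
/- If P(x) = ∑_{k=0}^m a_k x^k with 0 < a_0 ≤ a_1 ≤ ... ≤ a_m, then the coefficient sequence of P(x+1) is log-concave: writing P(x+1) = ∑ b_k x^k, we have b_k² ≥ b_{k-1} b_{k+1} for 1 ≤ k ≤ m-1. -/
/-!
Write `a j = ∑_{t ≤ j} d t` with increments `d t ≥ 0`. Exchanging the sums gives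
`b k = ∑_t d t * F k t` with `F k t = ∑_{j=t}^m C(j, k)`, so `b (k-1) * b (k+1)` and `b k ^ 2` are
quadratic forms in `d` with nonnegative coefficients, and it suffices to compare coefficients:
`F (k-1) s * F (k+1) t ≤ F k s * F k t`. This holds because `(m - k) / (k + 1)` separates the ratios,
`F (k+1) t / F k t ≤ (m - k) / (k + 1) ≤ F k s / F (k-1) s`; the first bound is termwise from
`(k + 1) C(j, k+1) = (j - k) C(j, k)`, the second uses the hockey-stick identity
`F (k-1) s = C(m+1, k) - C(s, k)`.
-/

open Finset

section Increments

variable {G : Type*} [AddCommGroup G]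

def increments (a : ℕ → G) : ℕ → G
  | 0 => a 0
  | t + 1 => a (t + 1) - a t

theorem sum_range_succ_increments (a : ℕ → G) (j : ℕ) :
    ∑ t ∈ range (j + 1), increments a t = a j := by
  induction j with
  | zero => simp [increments]
  | succ j ih => rw [sum_range_succ, ih, increments, add_sub_cancel]

theorem increments_nonneg [PartialOrder G] [IsOrderedAddMonoid G] {a : ℕ → G} {m t : ℕ}
    (h0 : 0 ≤ a 0) (hmono : ∀ k, k + 1 ≤ m → a k ≤ a (k + 1)) (ht : t ≤ m) :
    0 ≤ increments a t := by
  cases t with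
  | zero => exact h0
  | succ t => exact sub_nonneg.mpr (hmono t ht)

end Increments

theorem Nat.sum_range_choose_eq_choose_succ (n K : ℕ) :
    ∑ j ∈ range n, j.choose K = n.choose (K + 1) := by
  induction n with
  | zero => simp
  | succ n ih => rw [sum_range_succ, ih, Nat.choose_succ_succ', add_comm]

def tailChooseSum (m K t : ℕ) : ℕ := ∑ j ∈ Icc t m, j.choose K

theorem choose_add_tailChooseSum {m K t : ℕ} (ht : t ≤ m + 1) :
    t.choose (K + 1) + tailChooseSum m K t = (m + 1).choose (K + 1) := by
  rw [tailChooseSum, ← Ico_add_one_right_eq_Icc, ← Nat.sum_range_choose_eq_choose_succ,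
    ← Nat.sum_range_choose_eq_choose_succ, sum_range_add_sum_Ico _ ht]

theorem succ_mul_tailChooseSum_succ_le (m K t : ℕ) :
    (K + 1) * tailChooseSum m (K + 1) t ≤ (m - K) * tailChooseSum m K t := by
  simp only [tailChooseSum, mul_sum]
  refine sum_le_sum fun j hj => ?_
  calc (K + 1) * j.choose (K + 1) = (j - K) * j.choose K := by
        rw [mul_comm, Nat.choose_succ_right_eq, mul_comm]
    _ ≤ (m - K) * j.choose K := by gcongr; exact (mem_Icc.mp hj).2

theorem sub_mul_tailChooseSum_le {m K s : ℕ} (hs : s ≤ m) :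
    (m - (K + 1)) * tailChooseSum m K s ≤ (K + 2) * tailChooseSum m (K + 1) s := by
  rcases le_or_gt m K with hKm | hKm
  · simp [Nat.sub_eq_zero_of_le (hKm.trans K.le_succ)]
  generalize hc : m - (K + 1) = c
  -- With `T k = tailChooseSum m k s`:
  -- `(K + 2) * T (K + 1) = (c + 1) * C(m + 1, K + 1) - (K + 2) * C(s, K + 2)`
  -- `≥ c * (C(m + 1, K + 1) - C(s, K + 1)) = c * T K`
  have htail := choose_add_tailChooseSum (K := K) (show s ≤ m + 1 by omega)
  have htail' := choose_add_tailChooseSum (K := K + 1) (show s ≤ m + 1 by omega)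
  have hM : (m + 1).choose (K + 2) * (K + 2) = (m + 1).choose (K + 1) * (c + 1) := by
    rw [Nat.choose_succ_right_eq, show m + 1 - (K + 1) = c + 1 by omega]
  have hS : s.choose (K + 2) * (K + 2) ≤ s.choose (K + 1) * c := by
    rw [Nat.choose_succ_right_eq]; gcongr; omega
  have hcTail := congrArg (c * ·) htail
  have hKTail := congrArg ((K + 2) * ·) htail'
  simp only [mul_add] at hcTail hKTail
  linarith

theorem tailChooseSum_mul_le {m K s t : ℕ} (hK : K + 2 ≤ m) (hs : s ≤ m) :
    tailChooseSum m K s * tailChooseSum m (K + 2) t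
      ≤ tailChooseSum m (K + 1) s * tailChooseSum m (K + 1) t := by
  have hpos : 0 < (m - (K + 1)) * (K + 2) := Nat.mul_pos (by omega) (by omega)
  refine Nat.le_of_mul_le_mul_right ?_ hpos
  calc tailChooseSum m K s * tailChooseSum m (K + 2) t * ((m - (K + 1)) * (K + 2))
      = ((m - (K + 1)) * tailChooseSum m K s) * ((K + 2) * tailChooseSum m (K + 2) t) := by ring
    _ ≤ ((K + 2) * tailChooseSum m (K + 1) s) * ((m - (K + 1)) * tailChooseSum m (K + 1) t) :=
        Nat.mul_le_mul (sub_mul_tailChooseSum_le hs) (succ_mul_tailChooseSum_succ_le m (K + 1) t)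
    _ = tailChooseSum m (K + 1) s * tailChooseSum m (K + 1) t * ((m - (K + 1)) * (K + 2)) := by
        ring

theorem sum_choose_mul_eq_sum_increments_mul {R : Type*} [CommRing R] (a : ℕ → R) (m K : ℕ) :
    ∑ j ∈ Icc K m, (j.choose K : R) * a j
      = ∑ t ∈ range (m + 1), increments a t * tailChooseSum m K t := by
  have hzero : ∑ j ∈ Icc K m, (j.choose K : R) * a j
      = ∑ j ∈ range (m + 1), (j.choose K : R) * a j := by
    refine sum_subset (fun j hj => ?_) (fun j hj hj' => ?_)
    · simp only [mem_Icc, mem_range] at hj ⊢; omega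
    · simp only [mem_Icc, mem_range] at hj hj'
      rw [Nat.choose_eq_zero_of_lt (by omega), Nat.cast_zero, zero_mul]
  rw [hzero]
  simp_rw [← sum_range_succ_increments a, mul_sum, range_eq_Ico]
  rw [← sum_Ico_Ico_comm 0 (m + 1) fun t j => (j.choose K : R) * increments a t]
  refine sum_congr rfl fun t _ => ?_
  rw [tailChooseSum, ← Ico_add_one_right_eq_Icc, Nat.cast_sum, mul_sum]
  exact sum_congr rfl fun j _ => mul_comm _ _

theorem sum_mul_sum_le_sq_of_mul_le_mul {ι R : Type*} [CommSemiring R] [PartialOrder R]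
    [IsOrderedRing R] (s : Finset ι) (w f g h : ι → R) (hw : ∀ i ∈ s, 0 ≤ w i)
    (hfgh : ∀ i ∈ s, ∀ j ∈ s, f i * h j ≤ g i * g j) :
    (∑ i ∈ s, w i * f i) * (∑ i ∈ s, w i * h i) ≤ (∑ i ∈ s, w i * g i) ^ 2 := by
  rw [sq, sum_mul_sum, sum_mul_sum]
  refine sum_le_sum fun i hi => sum_le_sum fun j hj => ?_
  calc w i * f i * (w j * h j) = w i * w j * (f i * h j) := by ring
    _ ≤ w i * w j * (g i * g j) :=
        mul_le_mul_of_nonneg_left (hfgh i hi j hj) (mul_nonneg (hw i hi) (hw j hj))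
    _ = w i * g i * (w j * g j) := by ring

open Finset in
theorem stmt_8 (m : ℕ) (a b : ℕ → ℝ)
    (hpos : 0 < a 0)
    (hmono : ∀ k, k + 1 ≤ m → a k ≤ a (k + 1))
    (hb : ∀ k ≤ m, b k = ∑ j ∈ Icc k m, (j.choose k : ℝ) * a j) :
    ∀ k : ℕ, 1 ≤ k → k + 1 ≤ m → b (k - 1) * b (k + 1) ≤ b k ^ 2 := by
  intro k hk hkm
  obtain ⟨p, rfl⟩ : ∃ p, k = p + 1 := ⟨k - 1, by omega⟩
  rw [add_tsub_cancel_right, hb p (by omega), hb (p + 1) (by omega), hb (p + 1 + 1) hkm]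
  simp only [sum_choose_mul_eq_sum_increments_mul]
  refine sum_mul_sum_le_sq_of_mul_le_mul _ _ _ _ _
    (fun t ht => increments_nonneg hpos.le hmono (Nat.lt_succ_iff.mp (mem_range.mp ht)))
    (fun s hs t _ => ?_)
  exact_mod_cast tailChooseSum_mul_le hkm (Nat.lt_succ_iff.mp (mem_range.mp hs))
end

section
/- If P(x) = ∑_{k=0}^m a_k x^k with 0 < a_0 ≤ a_1 ≤ ... ≤ a_m and m ≥ 2, then writing P(x+1) = ∑ b_k x^k we have b_0/b_{m-1} ≤ b_1/b_{m-2}, i.e., (∑_{k=0}^m a_k)·(a_{m-2} + (m-1)a_{m-1} + C(m,2)a_m) ≤ (∑_{k=0}^m k·a_k)·(a_{m-1} + m·a_m). -/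
/-!
Chebyshev's sum inequality for the similarly ordered sequences `k` and `a_k` gives
`∑ k a_k ≥ (m / 2) ∑ a_k`, while monotonicity of the top three coefficients gives
`a_{m-2} + (m-1) a_{m-1} + C(m,2) a_m ≤ (m / 2) (a_{m-1} + m a_m)`; multiplying the two
(all quantities being nonnegative) yields the claim.
-/

open Finset

lemma monotoneOn_Iic_of_le_succ {α : Type*} [Preorder α] {a : ℕ → α} {m : ℕ}
    (h : ∀ k, k + 1 ≤ m → a k ≤ a (k + 1)) : MonotoneOn a (Set.Iic m) :=
  monotoneOn_of_le_succ Set.ordConnected_Iic fun k _ _ hk => h k hk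

lemma mul_sum_le_two_mul_sum_mul_of_monotoneOn {a : ℕ → ℝ} {m : ℕ}
    (ha : MonotoneOn a (Set.Iic m)) :
    (m : ℝ) * ∑ k ∈ range (m + 1), a k ≤ 2 * ∑ k ∈ range (m + 1), (k : ℝ) * a k := by
  have hmv : MonovaryOn (fun k : ℕ => (k : ℝ)) a (range (m + 1)) :=
    (Nat.mono_cast.monotoneOn _).monovaryOn (ha.mono fun k hk => by
      simpa [Nat.lt_succ_iff] using hk)
  have hcheb := hmv.sum_mul_sum_le_card_mul_sum
  have hgauss : ∑ k ∈ range (m + 1), (k : ℝ) = m * (m + 1) / 2 := by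
    have := congrArg (Nat.cast : ℕ → ℝ) (sum_range_id_mul_two (m + 1))
    push_cast at this
    linarith
  rw [hgauss, card_range] at hcheb
  push_cast at hcheb
  nlinarith

lemma add_mul_add_choose_two_mul_le {x y z : ℝ} {n : ℕ} (hn : 2 ≤ n) (hxz : x ≤ z)
    (hyz : y ≤ z) :
    x + ((n : ℝ) - 1) * y + (n.choose 2 : ℝ) * z ≤ (n : ℝ) / 2 * (y + n * z) := by
  have hn' : (2 : ℝ) ≤ n := by exact_mod_cast hn
  rw [Nat.cast_choose_two]
  nlinarith

theorem stmt_9 (m : ℕ) (hm : 2 ≤ m) (a : ℕ → ℝ)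
    (hpos : 0 < a 0)
    (hmono : ∀ k, k + 1 ≤ m → a k ≤ a (k + 1)) :
    (∑ k ∈ range (m + 1), a k) *
        (a (m - 2) + ((m : ℝ) - 1) * a (m - 1) + (m.choose 2 : ℝ) * a m) ≤
      (∑ k ∈ range (m + 1), (k : ℝ) * a k) * (a (m - 1) + (m : ℝ) * a m) := by
  have ha : MonotoneOn a (Set.Iic m) := monotoneOn_Iic_of_le_succ hmono
  have hle : ∀ {i j}, i ≤ j → j ≤ m → a i ≤ a j := fun hij hj =>
    ha (Set.mem_Iic.2 (hij.trans hj)) (Set.mem_Iic.2 hj) hij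
  have hnonneg : ∀ k ≤ m, 0 ≤ a k := fun k hk => hpos.le.trans (hle k.zero_le hk)
  have hS : 0 ≤ ∑ k ∈ range (m + 1), a k :=
    sum_nonneg fun k hk => hnonneg k (Nat.lt_succ_iff.1 (mem_range.1 hk))
  have hY : 0 ≤ a (m - 1) + (m : ℝ) * a m := by
    have := hnonneg (m - 1) (Nat.sub_le m 1)
    have := hnonneg m le_rfl
    positivity
  have hcheb := mul_sum_le_two_mul_sum_mul_of_monotoneOn ha
  calc _ ≤ (∑ k ∈ range (m + 1), a k) * ((m : ℝ) / 2 * (a (m - 1) + m * a m)) :=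
        mul_le_mul_of_nonneg_left (add_mul_add_choose_two_mul_le hm
          (hle (Nat.sub_le m 2) le_rfl) (hle (Nat.sub_le m 1) le_rfl)) hS
    _ = (m : ℝ) * (∑ k ∈ range (m + 1), a k) / 2 * (a (m - 1) + m * a m) := by ring
    _ ≤ _ := mul_le_mul_of_nonneg_right (by linarith) hY
end

section
/- The Boros–Moll coefficients c_k(m) = 2^{-2m+k}·C(2m-2k, m-k)·C(m+k, k) are strictly increasing in k: c_k(m) < c_{k+1}(m) for 0 ≤ k ≤ m-1. -/
noncomputable def bmCoeff (m k : ℕ) : ℝ :=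
  (2 : ℝ) ^ k / (2 : ℝ) ^ (2 * m) * ((2 * m - 2 * k).choose (m - k) : ℝ) *
    ((m + k).choose k : ℝ)

/-!
Consecutive coefficients satisfy
`(2(m-k) - 1)(k+1) c_{k+1}(m) = (m-k)(m+k+1) c_k(m)`,
from the recursions of the central binomial coefficient and of `C(n, k)` in `n` and `k`.
With `d = m - k ≥ 1` the gap between the two factors is `d² - d + k + 1 > 0`,
so positivity of `c_k(m)` gives monotonicity.
-/

lemma bmCoeff_pos {m k : ℕ} (hk : k ≤ m) : 0 < bmCoeff m k := by
  unfold bmCoeff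
  have h₁ : 0 < (2 * m - 2 * k).choose (m - k) := Nat.choose_pos (by omega)
  have h₂ : 0 < (m + k).choose k := Nat.choose_pos (by omega)
  positivity

lemma bmCoeff_succ_mul {m k : ℕ} (hk : k < m) :
    (2 * ((m : ℝ) - k) - 1) * (k + 1) * bmCoeff m (k + 1) =
      ((m : ℝ) - k) * (m + k + 1) * bmCoeff m k := by
  obtain ⟨d, rfl⟩ : ∃ d, m = k + d + 1 := ⟨m - k - 1, by omega⟩
  have hcentral : ((d : ℝ) + 1) * ((2 * d + 2).choose (d + 1) : ℕ) =
      2 * (2 * d + 1) * ((2 * d).choose d : ℕ) := by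
    exact_mod_cast Nat.succ_mul_centralBinom_succ d
  have hpascal : (((k + d + 1 + k : ℕ) : ℝ) + 1) * ((k + d + 1 + k).choose k : ℕ) =
      ((k + d + 1 + (k + 1)).choose (k + 1) : ℕ) * ((k : ℝ) + 1) := by
    exact_mod_cast Nat.add_one_mul_choose_eq (k + d + 1 + k) k
  unfold bmCoeff
  rw [show 2 * (k + d + 1) - 2 * k = 2 * d + 2 by omega, show k + d + 1 - k = d + 1 by omega,
    show 2 * (k + d + 1) - 2 * (k + 1) = 2 * d by omega, show k + d + 1 - (k + 1) = d by omega]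
  push_cast at hpascal ⊢
  linear_combination (2 : ℝ) ^ k / 2 ^ (2 * (k + d + 1)) *
    (-((k : ℝ) + 1) * ((k + d + 1 + (k + 1)).choose (k + 1) : ℕ) * hcentral
      - ((d : ℝ) + 1) * ((2 * d + 2).choose (d + 1) : ℕ) * hpascal)

theorem stmt_12 (m k : ℕ) (hk : k ≤ m - 1) (hm : 1 ≤ m) :
    bmCoeff m k < bmCoeff m (k + 1) := by
  have hkm : k < m := by omega
  have hd : (1 : ℝ) ≤ m - k := by
    have : (k : ℝ) + 1 ≤ m := by exact_mod_cast hkm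
    linarith
  have hlower : 0 < (2 * ((m : ℝ) - k) - 1) * (k + 1) := mul_pos (by linarith) (by positivity)
  have hgap : (2 * ((m : ℝ) - k) - 1) * (k + 1) < ((m : ℝ) - k) * (m + k + 1) := by
    nlinarith
  have hpos := bmCoeff_pos hkm.le
  have hrel := bmCoeff_succ_mul hkm
  by_contra! hle
  linarith [mul_le_mul_of_nonneg_left hle hlower.le, mul_lt_mul_of_pos_right hgap hpos]
end

section
/- If P(x) = ∑_{k=0}^m a_k x^k with 0 < a_0 ≤ ... ≤ a_m and b_k denotes the k-th coefficient of P(x+1), then b_{m-i}/b_i ≤ 1 for all 0 ≤ i ≤ ⌊(m-1)/2⌋ (i.e., b_{m-i} ≤ b_i whenever i < m-i). -/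
/-! For `m - i ≤ j ≤ m` unimodality of binomial coefficients gives
`C(j, m - i) = C(j, j - m + i) ≤ C(j, i)`, since `j - m + i ≤ i ≤ m - i`; so `b (m - i)` is bounded
termwise by part of the sum defining `b i`, whose remaining terms are nonnegative. -/

open Finset

theorem Nat.choose_monotoneOn_Iic_half (n : ℕ) : MonotoneOn n.choose (Set.Iic (n / 2)) :=
  monotoneOn_of_le_succ Set.ordConnected_Iic fun _ _ _ hsucc ↦
    Nat.choose_le_succ_of_lt_half_left (Order.succ_le_iff.mp hsucc)

theorem Nat.choose_le_choose_of_le_of_le_sub {n s t : ℕ} (hst : s ≤ t) (htn : t ≤ n - s) :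
    n.choose s ≤ n.choose t := by
  rcases le_or_gt t (n / 2) with ht | ht
  · exact n.choose_monotoneOn_Iic_half (le_trans hst ht) ht hst
  · rw [← Nat.choose_symm (by omega : t ≤ n)]
    exact n.choose_monotoneOn_Iic_half (by simp; omega) (by simp; omega) (by omega)

theorem Nat.choose_sub_le_choose {m i j : ℕ} (hi : 2 * i ≤ m) (hj : j ∈ Icc (m - i) m) :
    j.choose (m - i) ≤ j.choose i := by
  obtain ⟨hmj, hjm⟩ := mem_Icc.mp hj
  rw [← Nat.choose_symm hmj]
  exact Nat.choose_le_choose_of_le_of_le_sub (by omega) (by omega)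

theorem stmt_18 (m : ℕ) (a b : ℕ → ℝ)
    (hpos : 0 < a 0)
    (hmono : ∀ k, k + 1 ≤ m → a k ≤ a (k + 1))
    (hb : ∀ k ≤ m, b k = ∑ j ∈ Icc k m, (j.choose k : ℝ) * a j) :
    ∀ i : ℕ, i ≤ (m - 1) / 2 → b (m - i) ≤ b i := by
  intro i hi
  have h2i : 2 * i ≤ m := by omega
  have ha_mono : MonotoneOn a (Set.Iic m) :=
    monotoneOn_of_le_succ Set.ordConnected_Iic fun k _ _ hk ↦ hmono k hk
  have ha_nonneg : ∀ j ≤ m, 0 ≤ a j := fun j hj ↦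
    hpos.le.trans (ha_mono (by simp) hj (Nat.zero_le j))
  rw [hb i (by omega), hb (m - i) (Nat.sub_le _ _)]
  calc ∑ j ∈ Icc (m - i) m, (j.choose (m - i) : ℝ) * a j
      ≤ ∑ j ∈ Icc (m - i) m, (j.choose i : ℝ) * a j :=
        sum_le_sum fun j hj ↦ mul_le_mul_of_nonneg_right
          (by exact_mod_cast Nat.choose_sub_le_choose h2i hj)
          (ha_nonneg j (mem_Icc.mp hj).2)
    _ ≤ ∑ j ∈ Icc i m, (j.choose i : ℝ) * a j :=
        sum_le_sum_of_subset_of_nonneg (Icc_subset_Icc_left (by omega)) fun j hj _ ↦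
          mul_nonneg (Nat.cast_nonneg _) (ha_nonneg j (mem_Icc.mp hj).2)
end

section
/- If P(x) = ∑_{k=0}^m a_k x^k with 0 < a_0 ≤ ... ≤ a_m and b_k denotes the k-th coefficient of P(x+1), then b_{i-1} ≤ b_{m-i} for all 1 ≤ i ≤ ⌊m/2⌋. -/
/-!
Write `b_r = ∑_{j ≤ m} C(j, r) a_j` and expand the nondecreasing sequence `a` as partial sums
`a_j = ∑_{t ≤ j} d_t` of nonnegative increments. Summation by parts gives
`b_r = ∑_t d_t ∑_{t ≤ j ≤ m} C(j, r)`, so it suffices to compare the tails of the weights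
`C(·, i - 1)` and `C(·, m - i)`. By the hockey-stick identity the tail from `t` of `C(·, r)` is
`C(m + 1, r + 1) - C(t, r + 1)`; the first terms agree by symmetry since `i + (m - i + 1) = m + 1`,
and `C(t, m - i + 1) ≤ C(t, i)` for `t ≤ m` because `m - i + 1` is the farther of the two from `t / 2`.
-/

open Finset

namespace Nat

theorem choose_le_choose_of_le_half_left {n p q : ℕ} (hpq : p ≤ q) (hq : q ≤ n / 2) :
    n.choose p ≤ n.choose q := by
  induction q, hpq using Nat.le_induction with
  | base => rfl
  | succ q _ ih => exact (ih (by omega)).trans (choose_le_succ_of_lt_half_left (by omega))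

theorem choose_le_choose_of_add_le {n p q : ℕ} (hpq : p ≤ q) (h : p + q ≤ n) :
    n.choose p ≤ n.choose q := by
  rcases le_or_gt (2 * q) n with hq | hq
  · exact choose_le_choose_of_le_half_left hpq (by omega)
  · rw [← choose_symm (by omega : q ≤ n)]
    exact choose_le_choose_of_le_half_left (by omega) (by omega)

theorem choose_le_choose_of_le_add {n p q : ℕ} (hpq : p ≤ q) (h : n ≤ p + q) :
    n.choose q ≤ n.choose p := by
  rcases lt_or_ge n q with hq | hq
  · simp [choose_eq_zero_of_lt hq]
  · rw [← choose_symm hq]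
    exact choose_le_choose_of_add_le (by omega) (by omega)

theorem sum_range_choose_left (n r : ℕ) : ∑ j ∈ range n, j.choose r = n.choose (r + 1) := by
  induction n with
  | zero => simp
  | succ n ih => rw [sum_range_succ, ih, choose_succ_succ' n r, add_comm]

theorem sum_Ico_choose_add_choose (r : ℕ) {t n : ℕ} (h : t ≤ n) :
    ∑ j ∈ Ico t n, j.choose r + t.choose (r + 1) = n.choose (r + 1) := by
  rw [← sum_range_choose_left, ← sum_range_choose_left, ← sum_range_add_sum_Ico _ h, add_comm]

theorem sum_Ico_choose_le_sum_Ico_choose {k l m t : ℕ} (hkl : k ≤ l) (hm : k + l + 1 = m)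
    (ht : t ≤ m + 1) :
    ∑ j ∈ Ico t (m + 1), j.choose k ≤ ∑ j ∈ Ico t (m + 1), j.choose l := by
  have htail_k := sum_Ico_choose_add_choose k ht
  have htail_l := sum_Ico_choose_add_choose l ht
  have hsymm : (m + 1).choose (k + 1) = (m + 1).choose (l + 1) :=
    choose_symm_of_eq_add (by omega)
  have hhead : t.choose (l + 1) ≤ t.choose (k + 1) :=
    choose_le_choose_of_le_add (by omega) (by omega)
  omega

end Nat

theorem Finset.sum_mul_sum_range_succ_comm (n : ℕ) {R : Type*} [CommSemiring R] (w d : ℕ → R) :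
    ∑ j ∈ range n, w j * ∑ t ∈ range (j + 1), d t = ∑ t ∈ range n, d t * ∑ j ∈ Ico t n, w j := by
  simp only [mul_sum, range_eq_Ico]
  rw [sum_Ico_Ico_comm]
  simp only [mul_comm]

theorem Finset.sum_mul_le_sum_mul_of_tail_le {n : ℕ} {w w' a : ℕ → ℝ} (ha0 : 0 ≤ a 0)
    (ha : ∀ k, k + 1 < n → a k ≤ a (k + 1))
    (htail : ∀ t < n, ∑ j ∈ Ico t n, w j ≤ ∑ j ∈ Ico t n, w' j) :
    ∑ j ∈ range n, w j * a j ≤ ∑ j ∈ range n, w' j * a j := by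
  let d : ℕ → ℝ := fun
    | 0 => a 0
    | t + 1 => a (t + 1) - a t
  have hd : ∀ t < n, 0 ≤ d t := by
    rintro (_ | t) ht
    · exact ha0
    · exact sub_nonneg.mpr (ha t ht)
  have ha_eq : ∀ j, a j = ∑ t ∈ range (j + 1), d t := by
    intro j
    induction j with
    | zero => simp [d]
    | succ j ih => rw [sum_range_succ, ← ih]; simp [d]
  simp only [ha_eq, sum_mul_sum_range_succ_comm]
  exact sum_le_sum fun t ht =>
    mul_le_mul_of_nonneg_left (htail t (mem_range.mp ht)) (hd t (mem_range.mp ht))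

theorem Finset.sum_Icc_choose_mul_eq_sum_range {R : Type*} [Semiring R] (r m : ℕ) (a : ℕ → R) :
    ∑ j ∈ Icc r m, (j.choose r : R) * a j = ∑ j ∈ range (m + 1), (j.choose r : R) * a j := by
  refine sum_subset (fun j hj => ?_) fun j _ hj => ?_
  · simp only [mem_Icc] at hj
    simp only [mem_range]
    omega
  · rw [Nat.choose_eq_zero_of_lt (by simp_all), Nat.cast_zero, zero_mul]

open Finset in
theorem stmt_19 (m : ℕ) (a b : ℕ → ℝ)
    (hpos : 0 < a 0)
    (hmono : ∀ k, k + 1 ≤ m → a k ≤ a (k + 1))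
    (hb : ∀ k ≤ m, b k = ∑ j ∈ Icc k m, (j.choose k : ℝ) * a j) :
    ∀ i : ℕ, 1 ≤ i → i ≤ m / 2 → b (i - 1) ≤ b (m - i) := by
  intro i hi1 hi2
  have hm : i - 1 + (m - i) + 1 = m := by omega
  rw [hb _ (by omega), hb _ (by omega),
    sum_Icc_choose_mul_eq_sum_range, sum_Icc_choose_mul_eq_sum_range]
  refine sum_mul_le_sum_mul_of_tail_le hpos.le (fun k hk => hmono k (by omega)) fun t ht => ?_
  exact_mod_cast Nat.sum_Ico_choose_le_sum_Ico_choose (by omega) hm ht.le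
end
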